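/- Define for a, b ∈ ℂ the 4-qubit state |ψ⁽⁶⁾(a,b)⟩ = ((a+b)/2)(|0000⟩+|1111⟩) + b(|0101⟩+|1010⟩) + i(|1001⟩−|0110⟩) + ((a−b)/2)(|0011⟩+|1100⟩) + (1/2)(|0010⟩+|0100⟩+|1011⟩+|1101⟩−|0001⟩−|0111⟩−|1000⟩−|1110⟩). Let P₂₃ be the unitary on (ℂ²)^⊗4 that swaps the second and third tensor factors. Then P₂₃|ψ⁽⁶⁾(a,b)⟩ = |ψ⁽⁶⁾((a+3b)/2, (a−b)/2)⟩. -/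

import Mathlib

noncomputable section

open Complex

/-- The 4-qubit state space `(ℂ²)^⊗4`, realized as functions on the computational basis. -/
abbrev Q4 := Fin 2 × Fin 2 × Fin 2 × Fin 2 → ℂ

/-- The computational basis state `|ijkl⟩`. -/
def ket (i j k l : Fin 2) : Q4 := Pi.single (i, j, k, l) 1

/-- The factor-wise action `A ⊗ B ⊗ C ⊗ D` of four one-qubit operators on `(ℂ²)^⊗4`. -/
def tens4 (A B C D : Matrix (Fin 2) (Fin 2) ℂ) (ψ : Q4) : Q4 := fun x =>
  ∑ y : Fin 2 × Fin 2 × Fin 2 × Fin 2,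
    A x.1 y.1 * B x.2.1 y.2.1 * C x.2.2.1 y.2.2.1 * D x.2.2.2 y.2.2.2 * ψ y

/-- The swap of the second and third tensor factors: `|ijkl⟩ ↦ |ikjl⟩`. -/
def P23 (ψ : Q4) : Q4 := fun x => ψ (x.1, x.2.2.1, x.2.1, x.2.2.2)

/-- The family-6 state `|ψ⁽⁶⁾(a,b)⟩`. -/
def ψ6 (a b : ℂ) : Q4 :=
  ((a + b) / 2) • (ket 0 0 0 0 + ket 1 1 1 1)
  + b • (ket 0 1 0 1 + ket 1 0 1 0)
  + I • (ket 1 0 0 1 - ket 0 1 1 0)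
  + ((a - b) / 2) • (ket 0 0 1 1 + ket 1 1 0 0)
  + (1 / 2 : ℂ) • (ket 0 0 1 0 + ket 0 1 0 0 + ket 1 0 1 1 + ket 1 1 0 1
      - ket 0 0 0 1 - ket 0 1 1 1 - ket 1 0 0 0 - ket 1 1 1 0)

/-!
`P23` permutes the computational basis. It fixes `|0000⟩, |1111⟩, |1001⟩, |0110⟩`, maps the
`1/2`-block onto itself, and exchanges `|0101⟩ ↔ |0011⟩`, `|1010⟩ ↔ |1100⟩`. Hence it merely
swaps the coefficients `b` and `(a - b)/2` of `ψ6 a b`, and so does the reparametrisation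
`(a, b) ↦ ((a + 3b)/2, (a - b)/2)`, which keeps `(a + b)/2` fixed.
-/

def P23Linear : Q4 →ₗ[ℂ] Q4 where
  toFun := P23
  map_add' _ _ := rfl
  map_smul' _ _ := rfl

theorem P23Linear_apply (ψ : Q4) : P23Linear ψ = P23 ψ := rfl

theorem P23_ket (i j k l : Fin 2) : P23 (ket i j k l) = ket i k j l := by
  funext ⟨x₁, x₂, x₃, x₄⟩
  simp only [P23, ket, Pi.single_apply, Prod.mk.injEq, and_left_comm (a := x₃ = j)]

/-- swapping the two middle qubits maps `|ψ⁽⁶⁾(a,b)⟩` to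
`|ψ⁽⁶⁾((a+3b)/2, (a−b)/2)⟩`. -/
theorem stmt_11 (a b : ℂ) : P23 (ψ6 a b) = ψ6 ((a + 3 * b) / 2) ((a - b) / 2) := by
  change P23Linear (ψ6 a b) = _
  simp only [ψ6, map_add, map_sub, map_smul]
  simp only [P23Linear_apply, P23_ket]
  module
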